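/- arXiv:2301.10449 — 9 statements merged into one kernel-verified Lean document; each statement's English description precedes it below -/
import Mathlib

section
/- The generating function T(z) = 1/(z*r(z)), where r(z) = (1 + sqrt(1-4z+4z^2-4z^3))/(2z), satisfies T(z) = C(z(1 - z + z^2)), where C(x) = (1 - sqrt(1-4x))/(2x) is the Catalan number generating function. Equivalently, T satisfies the algebraic equation z(1-z+z^2)*T(z)^2 - T(z) + 1 = 0. -/
/-- The Catalan number generating function `C(x) = (1 - sqrt(1-4x))/(2x)`. -/
noncomputable def catalanGF (x : ℝ) : ℝ :=
  if x = 0 then 1 else (1 - Real.sqrt (1 - 4*x)) / (2*x)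

/-- `T(z) = 1/(z*r(z))` satisfies `T(z) = C(z(1-z+z^2))`, and equivalently
`z(1-z+z^2)*T(z)^2 - T(z) + 1 = 0`. -/
theorem peakless_MAP_gf (z : ℝ) (hz : z ≠ 0)
    (hΔ : 0 ≤ 1 - 4*z + 4*z^2 - 4*z^3)
    (r T : ℝ)
    (hr : r = (1 + Real.sqrt (1 - 4*z + 4*z^2 - 4*z^3)) / (2*z))
    (hT : T = 1 / (z * r)) :
    T = catalanGF (z * (1 - z + z^2)) ∧
      z * (1 - z + z^2) * T^2 - T + 1 = 0 := by
  set s := Real.sqrt (1 - 4*z + 4*z^2 - 4*z^3) with hs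
  have hs0 : 0 ≤ s := Real.sqrt_nonneg _
  have hs2 : s^2 = 1 - 4*z + 4*z^2 - 4*z^3 := Real.sq_sqrt hΔ
  have h1s : (1 : ℝ) + s ≠ 0 := by positivity
  have hq : (1 : ℝ) - z + z^2 ≠ 0 := by nlinarith [sq_nonneg (z - 1/2)]
  have hx : z * (1 - z + z^2) ≠ 0 := mul_ne_zero hz hq
  have hT2 : T = 2 / (1 + s) := by
    rw [hT, hr]; field_simp
  have harg : 1 - 4 * (z * (1 - z + z^2)) = 1 - 4*z + 4*z^2 - 4*z^3 := by ring
  constructor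
  · rw [hT2, catalanGF, if_neg hx, harg, ← hs]
    rw [div_eq_div_iff h1s (by positivity : (2 : ℝ) * (z * (1 - z + z^2)) ≠ 0)]
    nlinarith [hs2]
  · rw [hT2]
    field_simp
    nlinarith [hs2]
end

section
/- Let t(n,k) be the entries of the Riordan array (C(z(1-z+z^2)), z*C(z(1-z+z^2))), i.e., t(n,k) = [z^n] (z^k * C(z(1-z+z^2))^{k+1}). Then for all n ≥ 2 and k ≥ 1: t(n,k) = t(n,k-1) + t(n-1,k) - t(n-1,k-2) - t(n-2,k), where t(n,j) = 0 for j < 0. -/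
open PowerSeries

/-!
Column `j` of the Riordan array `(T, X T)` is `X^j T^(j+1)`. Multiplying the functional equation
by `X^j T^j` gives `(1 - X + X^2) X^(j+1) T^(j+2) = X^j T^(j+1) - X^j T^j`, and
`X^j T^j = X · X^(j-1) T^j` is the shifted column `j - 1` when `j ≥ 1`, while for `j = 0` it is `1`,
invisible in degrees `n ≥ 2`. Comparing coefficients of `X^n` gives the recurrence.
-/

section RiordanColumns

variable {R : Type*} [CommRing R]

theorem coeff_one_sub_X_add_X_sq_mul (f : R⟦X⟧) (m : ℕ) :
    coeff (m + 2) ((1 - X + X ^ 2) * f) = coeff (m + 2) f - coeff (m + 1) f + coeff m f := by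
  rw [sub_add_eq_add_sub, sub_mul, add_mul, one_mul, map_sub, map_add, coeff_X_pow_mul,
    show m + 2 = m + 1 + 1 by rfl, coeff_succ_X_mul]
  abel

theorem one_sub_X_add_X_sq_mul_column_succ {T : R⟦X⟧} (hT : (X - X ^ 2 + X ^ 3) * T ^ 2 + 1 = T)
    (j : ℕ) :
    (1 - X + X ^ 2) * (X ^ (j + 1) * T ^ (j + 2)) = X ^ j * T ^ (j + 1) - X ^ j * T ^ j := by
  linear_combination (X ^ j * T ^ j) * hT

theorem coeff_column_succ {T : R⟦X⟧} (hT : (X - X ^ 2 + X ^ 3) * T ^ 2 + 1 = T) (m j : ℕ) :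
    coeff (m + 2) (X ^ (j + 1) * T ^ (j + 2)) =
      coeff (m + 2) (X ^ j * T ^ (j + 1)) + coeff (m + 1) (X ^ (j + 1) * T ^ (j + 2))
        - coeff m (X ^ (j + 1) * T ^ (j + 2)) - coeff (m + 2) (X ^ j * T ^ j) := by
  have h := congrArg (coeff (m + 2)) (one_sub_X_add_X_sq_mul_column_succ hT j)
  rw [coeff_one_sub_X_add_X_sq_mul, map_sub] at h
  linear_combination h

theorem coeff_succ_X_pow_succ_mul (f : R⟦X⟧) (n i : ℕ) :
    coeff (n + 1) (X ^ (i + 1) * f) = coeff n (X ^ i * f) := by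
  rw [pow_succ', mul_assoc, coeff_succ_X_mul]

end RiordanColumns

/-- Riordan array recurrence for partial peak-less Motzkin paths with air pockets:
with `t(n,k) = [z^n] (z^k * C(z(1-z+z^2))^{k+1})` (and `t(n,j) = 0` for `j < 0`),
for `n ≥ 2` and `k ≥ 1`,
`t(n,k) = t(n,k-1) + t(n-1,k) - t(n-1,k-2) - t(n-2,k)`. -/
theorem peakless_riordan_recurrence (T : PowerSeries ℚ)
    (hT : (X - X^2 + X^3) * T^2 + 1 = T)
    (t : ℕ → ℤ → ℚ)
    (ht : ∀ n : ℕ, ∀ k : ℤ,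
      t n k = if 0 ≤ k then coeff n (X ^ k.toNat * T ^ (k.toNat + 1)) else 0) :
    ∀ n : ℕ, ∀ k : ℤ, 2 ≤ n → 1 ≤ k →
      t n k = t n (k - 1) + t (n - 1) k - t (n - 1) (k - 2) - t (n - 2) k := by
  intro n k hn hk
  obtain ⟨m, rfl⟩ : ∃ m, n = m + 2 := ⟨n - 2, by omega⟩
  obtain ⟨j, rfl⟩ : ∃ j : ℕ, k = j + 1 := ⟨(k - 1).toNat, by omega⟩
  have hcol (n j : ℕ) : t n j = coeff n (X ^ j * T ^ (j + 1)) := by simp [ht]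
  rw [show m + 2 - 1 = m + 1 by omega, Nat.add_sub_cancel, add_sub_cancel_right, ← Nat.cast_succ,
    hcol, hcol, hcol, hcol, coeff_column_succ hT]
  rcases j with _ | i
  · simp [ht, coeff_one]
  · rw [show ((i + 1 + 1 : ℕ) : ℤ) - 2 = (i : ℕ) by push_cast; ring, hcol,
      ← coeff_succ_X_pow_succ_mul (T ^ (i + 1)) (m + 1) i]
    ring
end

section
/- Let t_n = [z^n] C(z(1-z+z^2)) and let h_n = t_n - t_{n-1} for n ≥ 1 (coefficients counting peak-less MAP not ending in H, shifted). Then for all n ≥ 1: t_n = t_{n-1} + sum_{k=0}^{n-3} t_k * t_{n-k-3} + sum_{k=2}^{n-1} (t_k - t_{k-1}) * t_{n-k-1}, with empty sums equal to 0. -/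
/-!
Rewriting `T = 1 + (z - z² + z³) T²` as
`T = 1 + z T + z³ T² + z ((1 - z) T - 1) T`
and reading off the coefficient of `z^n` gives the recurrence: the last product contributes
`∑ (t_k - t_{k-1}) t_{n-k-1}`, whose terms with `k < 2` vanish because `t_0 = t_1 = 1`.
-/

open PowerSeries Finset

namespace PowerSeries

variable {R : Type*}

theorem coeff_X_pow_mul_mul_eq_sum_range [CommSemiring R] (d n : ℕ) (F G : R⟦X⟧) :
    coeff n (X ^ d * (F * G)) = ∑ k ∈ range (n + 1 - d), coeff k F * coeff (n - k - d) G := by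
  rw [coeff_X_pow_mul']
  split_ifs with hd
  · rw [coeff_mul, Nat.sum_antidiagonal_eq_sum_range_succ_mk, Nat.succ_eq_add_one,
      show n - d + 1 = n + 1 - d by omega]
    exact sum_congr rfl fun k _ => by rw [show n - d - k = n - k - d by omega]
  · rw [show n + 1 - d = 0 by omega, sum_range_zero]

theorem coeff_one_sub_X_mul_sub_one [CommRing R] {F : R⟦X⟧} (h₀ : constantCoeff F = 1)
    (h₁ : coeff 1 F = 1) (k : ℕ) :
    coeff k ((1 - X) * F - 1) = if 2 ≤ k then coeff k F - coeff (k - 1) F else 0 := by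
  match k with
  | 0 => simp [h₀]
  | 1 => simp [sub_mul, h₀, h₁]
  | k + 2 => simp [sub_mul, coeff_succ_X_mul]

end PowerSeries

/-- With `t_n = [z^n] C(z(1-z+z^2))` the number of peak-less Motzkin paths with air
pockets of length `n`, for all `n ≥ 1`:
`t_n = t_{n-1} + ∑_{k=0}^{n-3} t_k t_{n-k-3} + ∑_{k=2}^{n-1} (t_k - t_{k-1}) t_{n-k-1}`. -/
theorem peakless_MAP_recurrence (T : PowerSeries ℚ)
    (hT : (X - X^2 + X^3) * T^2 + 1 = T)
    (t : ℕ → ℚ) (ht : ∀ n, t n = coeff n T) :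
    ∀ n : ℕ, 1 ≤ n →
      t n = t (n - 1) + (∑ k ∈ Finset.range (n - 2), t k * t (n - k - 3)) +
        ∑ k ∈ Finset.Icc 2 (n - 1), (t k - t (k - 1)) * t (n - k - 1) := by
  have hT_split : T = 1 + X ^ 1 * T + X ^ 3 * (T * T) + X ^ 1 * (((1 - X) * T - 1) * T) := by
    linear_combination -hT
  have hT_factor : T = 1 + X * ((1 - X + X ^ 2) * T ^ 2) := by linear_combination -hT
  have h₀ : constantCoeff T = 1 := by
    simpa using congrArg constantCoeff hT_factor
  have h₁ : coeff 1 T = 1 := by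
    rw [hT_factor, map_add, coeff_succ_X_mul]
    simp [h₀]
  intro n hn
  have hcoeff := congrArg (coeff n) hT_split
  rw [map_add, map_add, map_add, coeff_one, if_neg (by omega), zero_add,
    coeff_X_pow_mul_mul_eq_sum_range, coeff_X_pow_mul_mul_eq_sum_range,
    coeff_X_pow_mul', if_pos hn,
    show n + 1 - 3 = n - 2 by omega, show n + 1 - 1 = n by omega] at hcoeff
  simp only [ht]
  rw [hcoeff]
  simp only [coeff_one_sub_X_mul_sub_one h₀ h₁, ite_mul, zero_mul, ← sum_filter]
  congr 2
  ext k
  simp only [mem_filter, mem_range, mem_Icc]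
  omega
end

section
/- The compositional/multiplicative inverse identity: if T(z) = C(z(1-z+z^2)) and g2(z) = (-1 + z^2 + sqrt(1 - 2z^2 + 4z^3 - 3z^4))/(2z^3), then the Riordan array (T(z), z*T(z)) has inverse Riordan array (g2(z), z*g2(z)); equivalently, setting f(z) = z*T(z) and h(z) = z*g2(z), one has f(h(z)) = z and h(f(z)) = z as formal power series, and g2(z)*T(h(z)) = 1. -/
/-- `T(z) = C(z(1-z+z^2))`. -/
noncomputable def Tfun (z : ℝ) : ℝ := catalanGF (z * (1 - z + z^2))

/-- `g2(z) = (-1 + z^2 + sqrt(1 - 2z^2 + 4z^3 - 3z^4))/(2z^3)` (with value `1` at `z = 0`,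
its limiting value). -/
noncomputable def g2fun (z : ℝ) : ℝ :=
  if z = 0 then 1
  else (-1 + z^2 + Real.sqrt (1 - 2*z^2 + 4*z^3 - 3*z^4)) / (2*z^3)

def riordanCurve (x y : ℝ) : ℝ := (1 - x + x^2) * y^2 - y + x

lemma catalanGF_eq_two_div {u : ℝ} (hu : u ≤ 1/4) :
    catalanGF u = 2 / (1 + Real.sqrt (1 - 4*u)) := by
  have hs : Real.sqrt (1 - 4*u) ^ 2 = 1 - 4*u := Real.sq_sqrt (by linarith)
  have hpos : 0 < 1 + Real.sqrt (1 - 4*u) := by positivity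
  rw [catalanGF]
  split_ifs with h0
  · subst h0; norm_num
  · rw [div_eq_div_iff (mul_ne_zero two_ne_zero h0) hpos.ne']
    linear_combination -hs

lemma abs_catalanGF_le_two {u : ℝ} (hu : u ≤ 1/4) : |catalanGF u| ≤ 2 := by
  rw [catalanGF_eq_two_div hu, abs_of_nonneg (by positivity)]
  exact div_le_self zero_le_two (le_add_of_nonneg_right (Real.sqrt_nonneg _))

lemma catalanGF_quadratic {u : ℝ} (hu : u ≤ 1/4) :
    u * catalanGF u ^ 2 - catalanGF u + 1 = 0 := by
  have hs : Real.sqrt (1 - 4*u) ^ 2 = 1 - 4*u := Real.sq_sqrt (by linarith)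
  have hpos : 0 < 1 + Real.sqrt (1 - 4*u) := by positivity
  rw [catalanGF_eq_two_div hu, div_pow, ← sub_eq_zero]
  generalize Real.sqrt (1 - 4*u) = s at hs hpos ⊢
  field_simp
  linear_combination hs

lemma g2fun_eq_div {y : ℝ} (hQ : 0 ≤ 1 - 2*y^2 + 4*y^3 - 3*y^4) (hy : y^2 < 1) :
    g2fun y = 2 * (1 - y) / (1 - y^2 + Real.sqrt (1 - 2*y^2 + 4*y^3 - 3*y^4)) := by
  have hs := Real.sq_sqrt hQ
  have hpos : 0 < 1 - y^2 + Real.sqrt (1 - 2*y^2 + 4*y^3 - 3*y^4) := by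
    have := Real.sqrt_nonneg (1 - 2*y^2 + 4*y^3 - 3*y^4)
    linarith
  rw [g2fun]
  split_ifs with h0
  · subst h0; norm_num
  · rw [div_eq_div_iff (by positivity) hpos.ne']
    linear_combination hs

lemma g2fun_quadratic {y : ℝ} (hQ : 0 ≤ 1 - 2*y^2 + 4*y^3 - 3*y^4) (hy : y^2 < 1) :
    y^3 * g2fun y ^ 2 + (1 - y^2) * g2fun y + y - 1 = 0 := by
  have hs := Real.sq_sqrt hQ
  have hpos : 0 < 1 - y^2 + Real.sqrt (1 - 2*y^2 + 4*y^3 - 3*y^4) := by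
    have := Real.sqrt_nonneg (1 - 2*y^2 + 4*y^3 - 3*y^4)
    linarith
  rw [g2fun_eq_div hQ hy]
  generalize Real.sqrt (1 - 2*y^2 + 4*y^3 - 3*y^4) = s at hs hpos ⊢
  field_simp
  linear_combination (y - 1) * hs

lemma abs_g2fun_le_three {y : ℝ} (hy : |y| ≤ 1/10) : |g2fun y| ≤ 3 := by
  obtain ⟨hyl, hyu⟩ := abs_le.mp hy
  have hQ : 0 ≤ 1 - 2*y^2 + 4*y^3 - 3*y^4 := by nlinarith [sq_nonneg y, sq_nonneg (y^2)]
  have hy2 : y^2 ≤ 1/100 := by nlinarith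
  have hs := Real.sqrt_nonneg (1 - 2*y^2 + 4*y^3 - 3*y^4)
  rw [g2fun_eq_div hQ (by linarith), abs_of_nonneg (div_nonneg (by linarith) (by linarith)),
    div_le_iff₀ (by linarith)]
  nlinarith

lemma riordanCurve_mul_Tfun {x : ℝ} (hx : x * (1 - x + x^2) ≤ 1/4) :
    riordanCurve x (x * Tfun x) = 0 := by
  have hC := catalanGF_quadratic hx
  rw [riordanCurve, Tfun]
  linear_combination x * hC

lemma riordanCurve_mul_g2fun {y : ℝ} (hQ : 0 ≤ 1 - 2*y^2 + 4*y^3 - 3*y^4) (hy : y^2 < 1) :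
    riordanCurve (y * g2fun y) y = 0 := by
  have hg := g2fun_quadratic hQ hy
  rw [riordanCurve]
  linear_combination y * hg

lemma mul_Tfun_eq_of_riordanCurve {x y : ℝ} (hx : |x| ≤ 1/3) (hy : |y| < 1/10)
    (hxy : riordanCurve x y = 0) : x * Tfun x = y := by
  obtain ⟨hxl, hxu⟩ := abs_le.mp hx
  obtain ⟨hyl, hyu⟩ := abs_lt.mp hy
  set p := 1 - x + x^2
  have hp0 : 0 < p := by nlinarith [sq_nonneg (2*x - 1)]
  have hp2 : p ≤ 2 := by nlinarith
  have hdisc : 1 - 4 * (x * p) = (1 - 2*y*p)^2 := by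
    rw [riordanCurve] at hxy
    linear_combination (-4*p) * hxy
  have hroot : 0 ≤ 1 - 2*y*p := by nlinarith
  have hu : x * p ≤ 1/4 := by nlinarith [hdisc, sq_nonneg (1 - 2*y*p)]
  rw [Tfun, catalanGF_eq_two_div hu, hdisc, Real.sqrt_sq hroot]
  rw [riordanCurve] at hxy
  field_simp
  linear_combination 2 * hxy

lemma mul_g2fun_eq_of_riordanCurve {x y : ℝ} (hx : |x| < 1/10) (hy : |y| ≤ 1/3)
    (hxy : riordanCurve x y = 0) : y * g2fun y = x := by
  obtain ⟨hxl, hxu⟩ := abs_lt.mp hx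
  obtain ⟨hyl, hyu⟩ := abs_le.mp hy
  have hy2 : y^2 ≤ 1/9 := by nlinarith
  rw [riordanCurve] at hxy
  have hdisc : 1 - 2*y^2 + 4*y^3 - 3*y^4 = (1 - y^2 + 2*y^2*x)^2 := by
    linear_combination (-4*y^2) * hxy
  have hroot : 0 ≤ 1 - y^2 + 2*y^2*x := by nlinarith [sq_nonneg y]
  rw [g2fun_eq_div (hdisc ▸ sq_nonneg _) (by linarith), hdisc, Real.sqrt_sq hroot]
  rw [← mul_div_assoc, div_eq_iff (by nlinarith [sq_nonneg y])]
  linear_combination (-2) * hxy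

/-- The Riordan array `(T(z), z T(z))` with `T(z) = C(z(1-z+z^2))` has inverse
`(g2(z), z g2(z))`: setting `f(z) = z T(z)` and `h(z) = z g2(z)`, one has
`f(h(z)) = z`, `h(f(z)) = z`, and `g2(z) * T(h(z)) = 1` near `z = 0`. -/
theorem riordan_inverse_peakless :
    ∃ ε > (0 : ℝ), ∀ z : ℝ, |z| < ε →
      (fun w => w * Tfun w) ((fun w => w * g2fun w) z) = z ∧
      (fun w => w * g2fun w) ((fun w => w * Tfun w) z) = z ∧
      g2fun z * Tfun ((fun w => w * g2fun w) z) = 1 := by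
  refine ⟨1/10, by norm_num, fun z hz => ?_⟩
  obtain ⟨hzl, hzu⟩ := abs_lt.mp hz
  have hu : z * (1 - z + z^2) ≤ 1/4 := by nlinarith [sq_nonneg z]
  have hQ : 0 ≤ 1 - 2*z^2 + 4*z^3 - 3*z^4 := by nlinarith [sq_nonneg z, sq_nonneg (z^2)]
  have hz2 : z^2 < 1 := by nlinarith
  have hh : |z * g2fun z| ≤ 1/3 := by
    rw [abs_mul]
    nlinarith [abs_g2fun_le_three hz.le, abs_nonneg z, abs_nonneg (g2fun z)]
  have hf : |z * Tfun z| ≤ 1/3 := by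
    rw [abs_mul]
    have hT : |Tfun z| ≤ 2 := abs_catalanGF_le_two hu
    nlinarith [abs_nonneg z, abs_nonneg (Tfun z)]
  have hfh := mul_Tfun_eq_of_riordanCurve hh hz (riordanCurve_mul_g2fun hQ hz2)
  refine ⟨hfh, mul_g2fun_eq_of_riordanCurve hz hf (riordanCurve_mul_Tfun hu), ?_⟩
  rcases eq_or_ne z 0 with rfl | hz0
  · simp [Tfun, g2fun, catalanGF]
  · exact mul_left_cancel₀ hz0 (by rw [mul_one, ← mul_assoc]; exact hfh)
end

section
/- Riordan array recurrence via A-sequence: let t(n,k) = [z^{n-k}] C(z(1-z+z^2))^{k+1} and let a(j) be the coefficients of A(z) = 2z^3/(-1 + z^2 + sqrt(1-2z^2+4z^3-3z^4)). Then for all n, k ≥ 0: t(n+1, k+1) = sum_{j ≥ 0} a(j) * t(n, k+j) (a finite sum since t(n,m) = 0 for m > n). -/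
/-! Write `a(j)` for the coefficients of `A`. The `A`-sequence of the Riordan array `(T, X T)` is
characterized by `A(X T) = T`. Evaluating the quadratic equation of `A` at `X ↦ X T`, `A ↦ T`
gives `T ((X - X² + X³) T² + 1 - T)`, which vanishes by the equation of `T`. So `T` and `A(X T)`
are roots of the same quadratic, and comparing constant coefficients excludes the other root.
Hence `t(n+1, k+1) = [X^n] X^k T^(k+1) · A(X T) = ∑ⱼ a(j) [X^n] X^(k+j) T^(k+j+1)`. -/

open PowerSeries Finset

theorem eq_of_quadratic_eq_zero {R : Type*} [CommRing R] [NoZeroDivisors R] {a b c x y : R}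
    (hx : a * x ^ 2 + b * x + c = 0) (hy : a * y ^ 2 + b * y + c = 0)
    (hxy : a * (x + y) + b ≠ 0) : x = y := by
  have h : (x - y) * (a * (x + y) + b) = 0 := by linear_combination hx - hy
  exact sub_eq_zero.mp ((mul_eq_zero.mp h).resolve_right hxy)

namespace PowerSeries

variable {R : Type*} [CommRing R] {φ : R⟦X⟧}

theorem coeff_mul_pow_eq_zero_of_lt (hφ : constantCoeff φ = 0) (ψ : R⟦X⟧) {n d : ℕ}
    (h : n < d) : coeff n (ψ * φ ^ d) = 0 := by
  have : X ^ d ∣ ψ * φ ^ d := (pow_dvd_pow_of_dvd (X_dvd_iff.mpr hφ) d).mul_left ψ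
  exact X_pow_dvd_iff.mp this n h

theorem coeff_subst_eq_sum_range (hφ : constantCoeff φ = 0) (f : R⟦X⟧) {m n : ℕ}
    (hmn : m ≤ n) :
    coeff m (f.subst φ) = ∑ d ∈ range (n + 1), coeff d f * coeff m (φ ^ d) := by
  rw [coeff_subst' (HasSubst.of_constantCoeff_zero' hφ)]
  refine finsum_eq_sum_of_support_subset _ fun d hd => ?_
  by_contra hdn
  simp only [coe_range, Set.mem_Iio, not_lt] at hdn
  refine hd ?_
  dsimp only
  rw [smul_eq_mul, ← one_mul (φ ^ d), coeff_mul_pow_eq_zero_of_lt hφ 1 (by omega), mul_zero]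

theorem constantCoeff_subst_of_constantCoeff_eq_zero (hφ : constantCoeff φ = 0) (f : R⟦X⟧) :
    constantCoeff (f.subst φ) = constantCoeff f := by
  simpa using coeff_subst_eq_sum_range hφ f le_rfl (m := 0)

theorem coeff_mul_subst (hφ : constantCoeff φ = 0) (ψ f : R⟦X⟧) (n : ℕ) :
    coeff n (ψ * f.subst φ) = ∑ d ∈ range (n + 1), coeff d f * coeff n (ψ * φ ^ d) := by
  calc coeff n (ψ * f.subst φ)
      = ∑ p ∈ antidiagonal n, coeff p.1 ψ *
          ∑ d ∈ range (n + 1), coeff d f * coeff p.2 (φ ^ d) := by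
        rw [coeff_mul]
        refine sum_congr rfl fun p hp => ?_
        rw [coeff_subst_eq_sum_range hφ f (HasAntidiagonal.antidiagonal.snd_le hp)]
    _ = ∑ d ∈ range (n + 1), coeff d f * coeff n (ψ * φ ^ d) := by
        simp_rw [coeff_mul, mul_sum, mul_left_comm (coeff _ ψ)]
        exact sum_comm

theorem subst_X_mul_eq_of_quadratic [IsDomain R] {T A : R⟦X⟧}
    (hT : (X - X ^ 2 + X ^ 3) * T ^ 2 + 1 = T)
    (hA : (X - 1) * A ^ 2 - (X ^ 2 - 1) * A + X ^ 3 = 0) (hA0 : constantCoeff A = 1) :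
    A.subst (X * T) = T := by
  have hXT : constantCoeff (X * T) = 0 := by simp
  have hT0 : constantCoeff T = 1 := by simpa using (congrArg constantCoeff hT).symm
  have hB0 : constantCoeff (A.subst (X * T)) = 1 :=
    (constantCoeff_subst_of_constantCoeff_eq_zero hXT A).trans hA0
  have hB : (X * T - 1) * A.subst (X * T) ^ 2 - ((X * T) ^ 2 - 1) * A.subst (X * T)
      + (X * T) ^ 3 = 0 := by
    have hs := HasSubst.of_constantCoeff_zero' hXT
    have := congrArg (substAlgHom hs) hA
    simp only [map_sub, map_add, map_mul, map_pow, map_one, map_zero, substAlgHom_X] at this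
    rwa [coe_substAlgHom] at this
  refine eq_of_quadratic_eq_zero (a := X * T - 1) (b := 1 - (X * T) ^ 2) (c := (X * T) ^ 3)
    (by linear_combination hB) (by linear_combination T * hT) fun h => ?_
  simpa [hB0, hT0] using congrArg constantCoeff h

end PowerSeries

/-- Riordan array recurrence via the `A`-sequence: with
`t(n,k) = [z^n](z^k C(z(1-z+z^2))^{k+1})` and `a(j)` the coefficients of
`A(z) = 2z^3/(-1 + z^2 + sqrt(1-2z^2+4z^3-3z^4))` (characterized by
`(z-1)A^2 - (z^2-1)A + z^3 = 0`, `A(0) = 1`), for all `n, k ≥ 0`: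
`t(n+1, k+1) = ∑_{j ≥ 0} a(j) t(n, k+j)` (a finite sum since `t(n,m) = 0` for `m > n`). -/
theorem riordan_A_sequence_recurrence (T A : PowerSeries ℚ)
    (hT : (X - X^2 + X^3) * T^2 + 1 = T)
    (hA : (X - 1) * A^2 - (X^2 - 1) * A + X^3 = 0)
    (hA0 : constantCoeff A = 1)
    (t : ℕ → ℕ → ℚ)
    (ht : ∀ n k, t n k = coeff n (X ^ k * T ^ (k + 1))) :
    ∀ n k : ℕ,
      t (n + 1) (k + 1) = ∑' j : ℕ, coeff j A * t n (k + j) := by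
  intro n k
  have hXT : constantCoeff (X * T) = 0 := by simp
  have hvanish : ∀ j ∉ range (n + 1), coeff j A * t n (k + j) = 0 := by
    intro j hj
    rw [mem_range, not_lt] at hj
    rw [ht, coeff_X_pow_mul', if_neg (by omega), mul_zero]
  calc t (n + 1) (k + 1) = coeff n (X ^ k * T ^ (k + 1) * A.subst (X * T)) := by
        rw [ht, subst_X_mul_eq_of_quadratic hT hA hA0, ← coeff_succ_X_mul n]
        ring_nf
    _ = ∑ j ∈ range (n + 1), coeff j A * t n (k + j) := by
        rw [coeff_mul_subst hXT]
        refine sum_congr rfl fun j _ => ?_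
        rw [ht]
        ring_nf
    _ = ∑' j, coeff j A * t n (k + j) := (tsum_eq_sum hvanish).symm
end

section
/- Let S(z) = s(z)/(z*r(z)) where r, s are the roots (with r(0-expansion the one with r ~ 1/z) of z*u^2 - u + z^2 - z + 1 = 0. Then S(z) = (z^2 - z + 1) * C(z(1-z+z^2))^2, where C is the Catalan generating function. Consequently S(z) = (T(z) - 1)/z where T(z) = C(z(1-z+z^2)); i.e., the number of valley-less Motzkin paths with air pockets of length n equals the number of peak-less Motzkin paths with air pockets of length n+1. -/
lemma catalanGF_of_ne_zero {x : ℝ} (hx : x ≠ 0) :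
    catalanGF x = (1 - √(1 - 4*x)) / (2*x) :=
  if_neg hx

lemma catalanGF_functional_eq {x : ℝ} (hx : 0 ≤ 1 - 4*x) :
    x * catalanGF x ^ 2 - catalanGF x + 1 = 0 := by
  rcases eq_or_ne x 0 with rfl | hx0
  · simp [catalanGF]
  have hsq : √(1 - 4*x) ^ 2 = 1 - 4*x := Real.sq_sqrt hx
  rw [catalanGF_of_ne_zero hx0]
  generalize √(1 - 4*x) = q at hsq ⊢
  field_simp
  linear_combination hsq

lemma quadratic_small_root_eq_mul_catalanGF {a : ℝ} (ha : a ≠ 0) (c : ℝ) :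
    (1 - √(1 - 4*a*c)) / (2*a) = c * catalanGF (a*c) := by
  rcases eq_or_ne c 0 with rfl | hc
  · simp
  rw [catalanGF_of_ne_zero (mul_ne_zero ha hc), mul_assoc]
  field_simp

lemma quadratic_roots_mul {a c : ℝ} (ha : a ≠ 0) (hdisc : 0 ≤ 1 - 4*a*c) :
    (1 + √(1 - 4*a*c)) / (2*a) * ((1 - √(1 - 4*a*c)) / (2*a)) = c / a := by
  have hsq : √(1 - 4*a*c) ^ 2 = 1 - 4*a*c := Real.sq_sqrt hdisc
  field_simp
  linear_combination -hsq

/-- With `r, s` the roots of `z u^2 - u + z^2 - z + 1 = 0`, the generating function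
`S(z) = s(z)/(z r(z))` of valley-less Motzkin paths with air pockets satisfies
`S(z) = (z^2 - z + 1) C(z(1-z+z^2))^2` and `S(z) = (T(z) - 1)/z` where
`T(z) = C(z(1-z+z^2))` counts peak-less Motzkin paths with air pockets. -/
theorem valleyless_gf (z : ℝ) (hz : z ≠ 0)
    (hΔ : 0 ≤ 1 - 4*z + 4*z^2 - 4*z^3)
    (r s : ℝ)
    (hr : r = (1 + Real.sqrt (1 - 4*z + 4*z^2 - 4*z^3)) / (2*z))
    (hs : s = (1 - Real.sqrt (1 - 4*z + 4*z^2 - 4*z^3)) / (2*z)) :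
    s / (z * r) = (z^2 - z + 1) * (catalanGF (z * (1 - z + z^2)))^2 ∧
    s / (z * r) = (catalanGF (z * (1 - z + z^2)) - 1) / z := by
  set p := 1 - z + z^2 with hp_def
  clear_value p
  have hp : 0 < p := by nlinarith [sq_nonneg (z - 1)]
  have hdisc : 1 - 4*z + 4*z^2 - 4*z^3 = 1 - 4*z*p := by rw [hp_def]; ring
  rw [hdisc] at hΔ hr hs
  have hrs : r * s = p / z := by rw [hr, hs]; exact quadratic_roots_mul hz hΔ
  have hsC : s = p * catalanGF (z*p) := by rw [hs]; exact quadratic_small_root_eq_mul_catalanGF hz p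
  have hr0 : r ≠ 0 := left_ne_zero_of_mul (hrs ▸ div_ne_zero hp.ne' hz)
  have hS : s / (z * r) = p * catalanGF (z*p) ^ 2 := by
    rw [div_eq_iff (mul_ne_zero hz hr0)]
    rw [eq_div_iff hz] at hrs
    linear_combination (1 + catalanGF (z*p) * z * r) * hsC - catalanGF (z*p) * hrs
  have hC := catalanGF_functional_eq (show 0 ≤ 1 - 4*(z*p) by linarith)
  refine ⟨by rw [hS, hp_def]; ring, ?_⟩
  rw [hS, eq_div_iff hz]
  linear_combination hC
end

section
/- Let t(n,k) = [z^n](s(z)/(z*r(z)^{k+1})) be the entries of the Riordan array ((z^2-z+1)*C(z(1-z+z^2))^2, z*C(z(1-z+z^2))). Then t(n,k) = sum_{j=0}^{n-k} ((k+2)/(2(n-j)-k+2)) * binomial(2(n-j)-k+2, n-k-j) * a(n-k-j+1, j), where a(m,j) = (-1)^j * sum_{i=0}^{m} binomial(m,i)*binomial(m-i, j-2i). -/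
/-!
Since `q = X (1 - X + X²)` has no constant term, `T = 1 + q T²` has exactly one solution, so
`T = C(q)` for the Catalan series `C`. Both `K ↦ C^K` and the ballot numbers
`b(m, K) = K/(2m+K) · binom(2m+K, m)` obey `C^(K+1) = C^K + X C^(K+2)`, whence `[X^m] C^K = b(m, K)`
and `T^(k+2) = ∑ₘ b(m, k+2) X^m (1 - X + X²)^m`. Multiplying by `(1 - X + X²) X^k` and reading off
`[X^n]` gives the formula with `j = n - k - m`. The coefficients of `(1 - X + X²)^m` are those of
`(1 + X + X²)^m = (X² + (1 + X))^m` up to the sign `(-1)^j`.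
-/

open PowerSeries

/-- `a(m,j) = [z^j](1-z+z^2)^m = (-1)^j ∑_{i=0}^m C(m,i) C(m-i, j-2i)`. -/
def aCoeff (m j : ℕ) : ℚ :=
  (-1 : ℚ) ^ j * ∑ i ∈ Finset.range (m + 1),
    if j < 2 * i then 0
    else (Nat.choose m i : ℚ) * (Nat.choose (m - i) (j - 2 * i) : ℚ)

open Finset

def ballot : ℕ → ℕ → ℕ
  | 0, _ => 1
  | _ + 1, 0 => 0
  | m + 1, K + 1 => ballot (m + 1) K + ballot m (K + 2)

theorem ballot_mul (m K : ℕ) : (2 * m + K) * ballot m K = K * (2 * m + K).choose m := by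
  induction m generalizing K with
  | zero => simp [ballot]
  | succ m ihm =>
    induction K with
    | zero => simp [ballot]
    | succ K ihK =>
      have h1 : (2 * m + K + 2) * ballot (m + 1) K = K * (2 * m + K + 2).choose (m + 1) := by
        rwa [show 2 * (m + 1) + K = 2 * m + K + 2 by ring] at ihK
      have h2 : (2 * m + K + 2) * ballot m (K + 2) = (K + 2) * (2 * m + K + 2).choose m := by
        simpa [add_assoc] using ihm (K + 2)
      have h3 := Nat.add_one_mul_choose_eq (2 * m + K + 2) m
      have h4 := Nat.choose_succ_right_eq (2 * m + K + 2) m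
      rw [show 2 * m + K + 2 - m = m + K + 2 by omega] at h4
      rw [show 2 * (m + 1) + (K + 1) = 2 * m + K + 2 + 1 by omega, ballot]
      -- clear the denominators `N (m + 1)`, `N = 2m + K + 2`, and write all binomials via `binom(N, m)`
      refine Nat.eq_of_mul_eq_mul_left (by positivity : 0 < (2 * m + K + 2) * (m + 1)) ?_
      zify at *
      linear_combination (m + 1 : ℤ) * (2 * m + K + 3) * (h1 + h2) +
        (2 * m + K + 2 : ℤ) * (K + 1) * h3 + (2 * m + K + 3 : ℤ) * K * h4

theorem ballot_eq_div {K : ℕ} (hK : K ≠ 0) (m : ℕ) :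
    (ballot m K : ℚ) = K / (2 * m + K) * (2 * m + K).choose m := by
  have : (2 * m + K : ℚ) ≠ 0 := by positivity
  rw [div_mul_eq_mul_div, eq_div_iff this]
  exact_mod_cast (mul_comm _ _).trans (ballot_mul m K)

theorem PowerSeries.catalanSeries_pow_succ (K : ℕ) :
    catalanSeries ^ (K + 1) = catalanSeries ^ K + X * catalanSeries ^ (K + 2) := by
  calc catalanSeries ^ (K + 1) = catalanSeries ^ K * (catalanSeries ^ 2 * X + 1) := by
        rw [catalanSeries_sq_mul_X_add_one, pow_succ]
    _ = _ := by ring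

theorem PowerSeries.coeff_catalanSeries_pow (m K : ℕ) : coeff m (catalanSeries ^ K) = ballot m K := by
  induction m generalizing K with
  | zero => simp [ballot]
  | succ m ihm =>
    induction K with
    | zero => simp [ballot, coeff_one]
    | succ K ihK => rw [catalanSeries_pow_succ, map_add, coeff_succ_X_mul, ihK, ihm, ballot]

section CommSemiring

variable {R : Type*} [CommSemiring R]

theorem PowerSeries.eq_zero_of_eq_mul_self {a D : R⟦X⟧} (ha : constantCoeff a = 0)
    (hD : D = a * D) : D = 0 := by
  have hdvd : ∀ j, (X : R⟦X⟧) ^ j ∣ D := by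
    intro j
    induction j with
    | zero => exact one_dvd D
    | succ j ih => rw [hD, pow_succ']; exact mul_dvd_mul (X_dvd_iff.2 ha) ih
  ext n
  simpa using X_pow_dvd_iff.1 (hdvd (n + 1)) n n.lt_succ_self

theorem PowerSeries.coeff_pow_eq_zero_of_lt {q : R⟦X⟧} (hq : constantCoeff q = 0) {e d : ℕ}
    (h : e < d) : coeff e (q ^ d) = 0 :=
  X_pow_dvd_iff.1 (pow_dvd_pow_of_dvd (X_dvd_iff.2 hq) d) e h

theorem PowerSeries.coeff_mul_X_mul_pow (P : R⟦X⟧) {m N : ℕ} (h : m ≤ N) :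
    coeff N (P * (X * P) ^ m) = coeff (N - m) (P ^ (m + 1)) := by
  rw [mul_pow, mul_left_comm, ← pow_succ', coeff_X_pow_mul', if_pos h]

theorem PowerSeries.coeff_one_add_X_pow (n k : ℕ) :
    coeff k ((1 + X : R⟦X⟧) ^ n) = n.choose k := by
  rw [← Polynomial.coe_X, ← Polynomial.coe_one, ← Polynomial.coe_add, ← Polynomial.coe_pow,
    Polynomial.coeff_coe, Polynomial.coeff_one_add_X_pow]

theorem PowerSeries.coeff_one_add_X_add_X_sq_pow (m j : ℕ) :
    coeff j ((1 + X + X ^ 2 : R⟦X⟧) ^ m) = ∑ i ∈ range (m + 1),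
      if j < 2 * i then 0 else (m.choose i : R) * ((m - i).choose (j - 2 * i) : R) := by
  rw [add_comm, add_pow, map_sum]
  refine sum_congr rfl fun i _ => ?_
  rw [← pow_mul, ← map_natCast (C (R := R)), mul_comm, coeff_C_mul,
    coeff_X_pow_mul', coeff_one_add_X_pow]
  split_ifs <;> first | omega | ring

theorem PowerSeries.coeff_map_catalanSeries_pow (m K : ℕ) :
    coeff m ((catalanSeries.map (Nat.castRingHom R)) ^ K) = ballot m K := by
  rw [← map_pow, coeff_map, coeff_catalanSeries_pow, eq_natCast]

end CommSemiring

section CommRing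

variable {R : Type*} [CommRing R]

theorem PowerSeries.eq_of_mul_sq_add_one_eq {q T U : R⟦X⟧} (hq : constantCoeff q = 0)
    (hT : q * T ^ 2 + 1 = T) (hU : q * U ^ 2 + 1 = U) : T = U := by
  refine sub_eq_zero.1 (eq_zero_of_eq_mul_self (a := q * (T + U)) (by simp [hq]) ?_)
  linear_combination hU - hT

theorem PowerSeries.eq_subst_catalanSeries {q T : R⟦X⟧} (hq : constantCoeff q = 0)
    (hT : q * T ^ 2 + 1 = T) : T = (catalanSeries.map (Nat.castRingHom R)).subst q := by
  have hs := HasSubst.of_constantCoeff_zero' hq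
  refine eq_of_mul_sq_add_one_eq hq hT ?_
  conv_rhs => rw [← catalanSeries_sq_mul_X_add_one]
  rw [← coe_substAlgHom hs]
  simp [substAlgHom_X hs, mul_comm]

theorem PowerSeries.X_pow_dvd_subst_sub_sum {S : Type*} [CommRing S] [Algebra R S] {q : S⟦X⟧}
    (hq : constantCoeff q = 0) (f : R⟦X⟧) (n : ℕ) :
    X ^ n ∣ f.subst q - ∑ m ∈ range n, coeff m f • q ^ m := by
  refine X_pow_dvd_iff.2 fun e he => ?_
  rw [map_sub, coeff_subst' (HasSubst.of_constantCoeff_zero' hq),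
    finsum_eq_sum_of_support_subset (s := range n), map_sum, sub_eq_zero]
  · simp
  · intro d hd
    simp only [Function.mem_support, coe_range, Set.mem_Iio] at hd ⊢
    by_contra! hnd
    exact hd (by rw [coeff_pow_eq_zero_of_lt hq (by omega), smul_zero])

theorem PowerSeries.coeff_mul_subst_s13 {S : Type*} [CommRing S] [Algebra R S] {q : S⟦X⟧}
    (hq : constantCoeff q = 0) (f : R⟦X⟧) (g : S⟦X⟧) (n : ℕ) :
    coeff n (g * f.subst q) = ∑ m ∈ range (n + 1), coeff m f • coeff n (g * q ^ m) := by
  obtain ⟨h, hh⟩ := X_pow_dvd_subst_sub_sum hq f (n + 1)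
  rw [sub_eq_iff_eq_add] at hh
  rw [hh, mul_add, map_add, mul_left_comm, coeff_X_pow_mul', if_neg (by omega), zero_add,
    mul_sum, map_sum]
  simp only [mul_smul_comm, LinearMap.map_smul_of_tower]

end CommRing

theorem coeff_X_sq_sub_X_add_one_pow (m j : ℕ) :
    coeff j ((X ^ 2 - X + 1 : ℚ⟦X⟧) ^ m) = aCoeff m j := by
  have h : (X ^ 2 - X + 1 : ℚ⟦X⟧) = rescale (-1) (1 + X + X ^ 2) := by
    simp only [map_add, map_pow, map_one, rescale_X, map_neg]
    ring
  rw [h, ← map_pow, coeff_rescale, coeff_one_add_X_add_X_sq_pow, aCoeff]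

/-- Closed form for the entries
`t(n,k) = [z^n] ((z^2-z+1) C(z(1-z+z^2))^2 ⋅ (z C(z(1-z+z^2)))^k)` of the Riordan array
counting partial valley-less Motzkin paths with air pockets:
`t(n,k) = ∑_{j=0}^{n-k} ((k+2)/(2(n-j)-k+2)) C(2(n-j)-k+2, n-k-j) a(n-k-j+1, j)`. -/
theorem valleyless_riordan_closed_form (T : PowerSeries ℚ)
    (hT : (X - X^2 + X^3) * T^2 + 1 = T) :
    ∀ n k : ℕ, k ≤ n →
      coeff (R := ℚ) n ((X^2 - X + 1) * X ^ k * T ^ (k + 2)) =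
        ∑ j ∈ Finset.range (n - k + 1),
          ((k : ℚ) + 2) / (2 * ((n : ℚ) - j) - k + 2) *
            (Nat.choose (2 * (n - j) - k + 2) (n - k - j) : ℚ) *
            aCoeff (n - k - j + 1) j := by
  intro n k hkn
  obtain ⟨N, rfl⟩ := Nat.exists_eq_add_of_le hkn
  have hq : constantCoeff (X - X ^ 2 + X ^ 3 : ℚ⟦X⟧) = 0 := by simp
  rw [mul_comm _ (X ^ k), mul_assoc, coeff_X_pow_mul', if_pos (by omega), Nat.add_sub_cancel_left,
    eq_subst_catalanSeries hq hT, ← subst_pow (HasSubst.of_constantCoeff_zero' hq),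
    coeff_mul_subst_s13 hq, ← sum_range_reflect]
  refine sum_congr rfl fun j hj => ?_
  have hjN : j ≤ N := Nat.lt_succ_iff.1 (mem_range.1 hj)
  rw [show N + 1 - 1 - j = N - j by omega]
  have hqX : (X - X ^ 2 + X ^ 3 : ℚ⟦X⟧) = X * (X ^ 2 - X + 1) := by ring
  rw [smul_eq_mul, coeff_map_catalanSeries_pow, ballot_eq_div (by omega), hqX,
    coeff_mul_X_mul_pow _ (by omega), coeff_X_sq_sub_X_add_one_pow, show N - (N - j) = j by omega,
    show 2 * (k + N - j) - k + 2 = 2 * (N - j) + (k + 2) by omega]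
  push_cast [Nat.cast_sub hjN]
  ring
end

section
/- Let m_n be the number of Motzkin paths of length n avoiding the factor UHU (with generating function m(z) satisfying z^2(z^2-z+1)m^2 - (1-z-z^3)m + 1 = 0, m(0)=1). Then for all n ≥ 3: m_n = m_{n-1} + m_{n-2} + m_{n-3} + sum_{k=2}^{n-2} m_{k-2}*m_{n-k-2} + sum_{k=3}^{n-1} (m_{k-1} - m_{k-2})*m_{n-k-1}. -/
/-!
Both convolution sums are coefficients of power series built from `M`: the first is
`[X^n] X^4 M^2`, and the second is `[X^n] X (X M - X^2 M - X) M`, since `X M - X^2 M - X` has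
coefficients `m_{k-1} - m_{k-2}` for `k ≥ 3` and none below degree 3 (as `m_0 = m_1 = 1`).
Adding the shifts `X M`, `X^2 M`, `X^3 M` for the first three terms, the functional equation
says exactly that the right-hand side is the generating function `M - 1`.
-/

open PowerSeries Finset

theorem PowerSeries.coeff_mul_eq_sum_Icc {R : Type*} [Semiring R] {f : R⟦X⟧} {a : ℕ}
    (hf : ∀ k < a, coeff k f = 0) (g : R⟦X⟧) (n : ℕ) :
    coeff n (f * g) = ∑ k ∈ Icc a n, coeff k f * coeff (n - k) g := by
  rw [coeff_mul, Nat.sum_antidiagonal_eq_sum_range_succ_mk]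
  refine (sum_subset (fun k hk => ?_) fun k hk hk' => ?_).symm
  · simp only [mem_Icc] at hk
    simp only [mem_range]
    omega
  · simp only [mem_Icc, mem_range, not_and_or, not_le] at hk hk'
    rw [hf k (by omega), zero_mul]

theorem PowerSeries.coeff_X_pow_mul_mul_eq_sum_Icc {R : Type*} [Semiring R] {f : R⟦X⟧} {a : ℕ}
    (hf : ∀ k < a, coeff k f = 0) (g : R⟦X⟧) {b n : ℕ} (hbn : b ≤ n) :
    coeff n (X ^ b * (f * g)) = ∑ k ∈ Icc a (n - b), coeff k f * coeff (n - k - b) g := by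
  rw [coeff_X_pow_mul', if_pos hbn, coeff_mul_eq_sum_Icc hf]
  simp only [Nat.sub_right_comm]

theorem PowerSeries.coeff_one_eq_constantCoeff_of_uhu {R : Type*} [CommRing R] {M : R⟦X⟧}
    (hM : X^2 * (X^2 - X + 1) * M^2 - (1 - X - X^3) * M + 1 = 0) :
    coeff 1 M = constantCoeff M := by
  have hfix : M = 1 + X * (M + X^2 * M + X * M^2 - X^2 * M^2 + X^3 * M^2) := by
    linear_combination -hM
  simpa [coeff_one, coeff_zero_eq_constantCoeff_apply] using congrArg (coeff 1) hfix

/-- With `m_n` the number of Motzkin paths of length `n` avoiding the factor `UHU`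
(whose generating function satisfies `z^2(z^2-z+1)m^2 - (1-z-z^3)m + 1 = 0`, `m(0)=1`),
for all `n ≥ 3`:
`m_n = m_{n-1} + m_{n-2} + m_{n-3} + ∑_{k=2}^{n-2} m_{k-2} m_{n-k-2}
       + ∑_{k=3}^{n-1} (m_{k-1} - m_{k-2}) m_{n-k-1}`. -/
theorem UUless_recurrence (M : PowerSeries ℚ)
    (hM : X^2 * (X^2 - X + 1) * M^2 - (1 - X - X^3) * M + 1 = 0)
    (hM0 : constantCoeff M = 1)
    (m : ℕ → ℚ) (hm : ∀ n, m n = coeff n M) :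
    ∀ n : ℕ, 3 ≤ n →
      m n = m (n - 1) + m (n - 2) + m (n - 3) +
        (∑ k ∈ Finset.Icc 2 (n - 2), m (k - 2) * m (n - k - 2)) +
        ∑ k ∈ Finset.Icc 3 (n - 1), (m (k - 1) - m (k - 2)) * m (n - k - 1) := by
  obtain rfl : m = fun n => coeff n M := funext hm
  intro n hn
  have hM1 : coeff 1 M = 1 := (coeff_one_eq_constantCoeff_of_uhu hM).trans hM0
  have hshift : ∀ j ≤ n, coeff (n - j) M = coeff n (X ^ j * M) := fun j hj => by
    rw [coeff_X_pow_mul', if_pos hj]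
  have hconv₁ : ∑ k ∈ Icc 2 (n - 2), coeff (k - 2) M * coeff (n - k - 2) M =
      coeff n (X ^ 2 * (X ^ 2 * M * M)) := by
    rw [coeff_X_pow_mul_mul_eq_sum_Icc (a := 2) (fun k hk => ?_) M (by omega)]
    · refine sum_congr rfl fun k hk => ?_
      rw [coeff_X_pow_mul', if_pos (mem_Icc.1 hk).1]
    · rw [coeff_X_pow_mul', if_neg (by omega)]
  have hconv₂ : ∑ k ∈ Icc 3 (n - 1), (coeff (k - 1) M - coeff (k - 2) M) * coeff (n - k - 1) M =
      coeff n (X ^ 1 * ((X ^ 1 * M - X ^ 2 * M - X ^ 1) * M)) := by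
    rw [coeff_X_pow_mul_mul_eq_sum_Icc (a := 3) (fun k hk => ?_) M (by omega)]
    · refine sum_congr rfl fun k hk => ?_
      have hk3 := (mem_Icc.1 hk).1
      simp only [map_sub, coeff_X_pow_mul', coeff_X_pow, if_pos (by omega : 1 ≤ k),
        if_pos (by omega : 2 ≤ k), if_neg (by omega : k ≠ 1), sub_zero]
    · interval_cases k <;> simp only [map_sub, coeff_X_pow_mul', coeff_X_pow] <;>
        simp [hM1, coeff_zero_eq_constantCoeff_apply, hM0]
  simp only [hconv₁, hconv₂, hshift 1 (by omega), hshift 2 (by omega), hshift 3 (by omega),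
    ← map_add]
  rw [show X ^ 1 * M + X ^ 2 * M + X ^ 3 * M + X ^ 2 * (X ^ 2 * M * M) +
      X ^ 1 * ((X ^ 1 * M - X ^ 2 * M - X ^ 1) * M) = M - 1 by linear_combination hM]
  simp [coeff_one, show n ≠ 0 by omega]
end

section
/- There is a bijection between valley-less Motzkin paths with air pockets of length n-1 and peak-less Motzkin paths with air pockets of length n; hence the number of valley-less MAP of length n-1 equals the number of peak-less MAP of length n for all n ≥ 1. -/
/-!
Appending a flat step to a valley-less MAP of length `n - 1` gives a MAP of length `n` in which
every down-step is immediately followed by a flat step, since `D_k U` is forbidden and `D_k D_j`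
impossible; conversely such a MAP must end with a flat step, which can be removed. Dually, a MAP is
peak-less exactly when every down-step is immediately preceded by a flat step. Swapping every
factor `D_k H` into `H D_k` maps the first class onto the second: the only height that changes is
the one between the two swapped steps, and it goes up; swapping every `H D_k` back into `D_k H`
lowers that height to the height after `D_k`, so the path still stays above the axis.
-/

/-- A Motzkin path with air pockets (MAP), encoded as the list of vertical displacements
of its steps (`1` for `U`, `0` for `H`, `-k` for `D_k`): it stays in the first quadrant,
ends on the `x`-axis, and no two down-steps are consecutive. -/
def IsMAP (l : List ℤ) : Prop :=
  (∀ s ∈ l, s = 1 ∨ s = 0 ∨ s ≤ -1) ∧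
  (∀ p ∈ l.scanl (· + ·) 0, 0 ≤ p) ∧
  l.sum = 0 ∧
  l.Chain' (fun a b => ¬(a < 0 ∧ b < 0))

/-- A MAP is peak-less if it has no factor `U D_k`. -/
def PeakLess (l : List ℤ) : Prop := l.Chain' (fun a b => ¬(a = 1 ∧ b < 0))

/-- A MAP is valley-less if it has no factor `D_k U`. -/
def ValleyLess (l : List ℤ) : Prop := l.Chain' (fun a b => ¬(a < 0 ∧ b = 1))

namespace MotzkinAirPocket

def delayDowns : List ℤ → List ℤ
  | [] => []
  | [a] => [a]
  | a :: b :: t => if a < 0 then b :: a :: delayDowns t else a :: delayDowns (b :: t)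

def advanceDowns : List ℤ → List ℤ
  | [] => []
  | [a] => [a]
  | a :: b :: t => if b < 0 then b :: a :: advanceDowns t else a :: advanceDowns (b :: t)

theorem delayDowns_perm (l : List ℤ) : (delayDowns l).Perm l := by
  induction l using delayDowns.induct with
  | case1 | case2 => rfl
  | case3 a b t h ih =>
    rw [delayDowns, if_pos h]
    exact ((ih.cons a).cons b).trans (.swap a b t)
  | case4 a b t h ih =>
    rw [delayDowns, if_neg h]
    exact ih.cons a

theorem advanceDowns_perm (l : List ℤ) : (advanceDowns l).Perm l := by
  induction l using advanceDowns.induct with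
  | case1 | case2 => rfl
  | case3 a b t h ih =>
    rw [advanceDowns, if_pos h]
    exact ((ih.cons a).cons b).trans (.swap a b t)
  | case4 a b t h ih =>
    rw [advanceDowns, if_neg h]
    exact ih.cons a

theorem delayDowns_cons_of_nonneg {a : ℤ} (ha : 0 ≤ a) (l : List ℤ) :
    delayDowns (a :: l) = a :: delayDowns l := by
  cases l with
  | nil => rfl
  | cons b t => rw [delayDowns, if_neg (not_lt.2 ha)]

theorem advanceDowns_cons_of_head_nonneg (a : ℤ) {l : List ℤ} (hl : ∀ b ∈ l.head?, 0 ≤ b) :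
    advanceDowns (a :: l) = a :: advanceDowns l := by
  cases l with
  | nil => rfl
  | cons b t => rw [advanceDowns, if_neg (not_lt.2 (hl b rfl))]

def FlatAfterDowns (l : List ℤ) : Prop :=
  l.IsChain (fun a b => a < 0 → b = 0) ∧ ∀ x ∈ l.getLast?, 0 ≤ x

def FlatBeforeDowns (l : List ℤ) : Prop :=
  l.IsChain (fun a b => b < 0 → a = 0) ∧ ∀ x ∈ l.head?, 0 ≤ x

theorem flatAfterDowns_nil : FlatAfterDowns [] := by simp [FlatAfterDowns]

theorem flatAfterDowns_singleton {a : ℤ} : FlatAfterDowns [a] ↔ 0 ≤ a := by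
  simp [FlatAfterDowns]

theorem flatAfterDowns_cons_cons {a b : ℤ} {t : List ℤ} :
    FlatAfterDowns (a :: b :: t) ↔ (a < 0 → b = 0) ∧ FlatAfterDowns (b :: t) := by
  simp only [FlatAfterDowns, List.isChain_cons_cons, List.getLast?_cons_cons, and_assoc]

theorem FlatAfterDowns.of_cons {a : ℤ} {t : List ℤ} (h : FlatAfterDowns (a :: t)) :
    FlatAfterDowns t := by
  cases t with
  | nil => exact flatAfterDowns_nil
  | cons b t => exact (flatAfterDowns_cons_cons.1 h).2

theorem FlatAfterDowns.cons_of_nonneg {a : ℤ} {t : List ℤ} (ha : 0 ≤ a)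
    (h : FlatAfterDowns t) : FlatAfterDowns (a :: t) := by
  cases t with
  | nil => exact flatAfterDowns_singleton.2 ha
  | cons b t => exact flatAfterDowns_cons_cons.2 ⟨fun h => absurd h (not_lt.2 ha), h⟩

theorem flatBeforeDowns_cons {a : ℤ} {t : List ℤ} :
    FlatBeforeDowns (a :: t) ↔
      0 ≤ a ∧ (∀ b ∈ t.head?, b < 0 → a = 0) ∧ t.IsChain (fun a b => b < 0 → a = 0) := by
  simp only [FlatBeforeDowns, List.isChain_cons, List.head?_cons, Option.mem_some_iff,
    forall_eq']
  exact and_comm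

theorem FlatBeforeDowns.cons_of_nonneg {a : ℤ} {t : List ℤ} (ha : 0 ≤ a)
    (h : FlatBeforeDowns t) : FlatBeforeDowns (a :: t) :=
  flatBeforeDowns_cons.2 ⟨ha, fun b hb hneg => absurd (h.2 b hb) (not_le.2 hneg), h.1⟩

theorem FlatBeforeDowns.of_cons_cons_of_nonneg {a b : ℤ} {t : List ℤ}
    (h : FlatBeforeDowns (a :: b :: t)) (hb : 0 ≤ b) : FlatBeforeDowns (b :: t) :=
  ⟨(flatBeforeDowns_cons.1 h).2.2, by simpa using hb⟩

theorem FlatBeforeDowns.of_cons_cons_of_neg {a b : ℤ} {t : List ℤ}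
    (h : FlatBeforeDowns (a :: b :: t)) (hb : b < 0) : FlatBeforeDowns t := by
  obtain ⟨htb, ht⟩ := List.isChain_cons.1 (flatBeforeDowns_cons.1 h).2.2
  exact ⟨ht, fun c hc => not_lt.1 fun hc' => hb.ne (htb c hc hc')⟩

theorem flatBeforeDowns_delayDowns {l : List ℤ} (h : FlatAfterDowns l) :
    FlatBeforeDowns (delayDowns l) := by
  induction l using delayDowns.induct with
  | case1 => simp [delayDowns, FlatBeforeDowns]
  | case2 a => simpa [delayDowns, FlatBeforeDowns, flatAfterDowns_singleton] using h
  | case3 a b t ha ih =>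
    obtain ⟨hb, h⟩ := flatAfterDowns_cons_cons.1 h
    obtain ⟨hdt, hhead⟩ := ih h.of_cons
    rw [delayDowns, if_pos ha, hb ha]
    refine flatBeforeDowns_cons.2 ⟨le_rfl, fun _ _ _ => rfl, ?_⟩
    exact hdt.cons fun c hc hneg => absurd (hhead c hc) (not_le.2 hneg)
  | case4 a b t ha ih =>
    rw [delayDowns, if_neg ha]
    exact (ih (flatAfterDowns_cons_cons.1 h).2).cons_of_nonneg (not_lt.1 ha)

theorem flatAfterDowns_advanceDowns {l : List ℤ} (h : FlatBeforeDowns l) :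
    FlatAfterDowns (advanceDowns l) := by
  induction l using advanceDowns.induct with
  | case1 => exact flatAfterDowns_nil
  | case2 a => exact flatAfterDowns_singleton.2 (flatBeforeDowns_cons.1 h).1
  | case3 a b t hb ih =>
    rw [advanceDowns, if_pos hb, (flatBeforeDowns_cons.1 h).2.1 b rfl hb]
    exact flatAfterDowns_cons_cons.2
      ⟨fun _ => rfl, (ih (h.of_cons_cons_of_neg hb)).cons_of_nonneg le_rfl⟩
  | case4 a b t hb ih =>
    rw [advanceDowns, if_neg hb]
    exact (ih (h.of_cons_cons_of_nonneg (not_lt.1 hb))).cons_of_nonneg (flatBeforeDowns_cons.1 h).1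

theorem advanceDowns_delayDowns {l : List ℤ} (h : FlatAfterDowns l) :
    advanceDowns (delayDowns l) = l := by
  induction l using delayDowns.induct with
  | case1 | case2 => rfl
  | case3 a b t ha ih =>
    rw [delayDowns, if_pos ha, advanceDowns, if_pos ha,
      ih (flatAfterDowns_cons_cons.1 h).2.of_cons]
  | case4 a b t ha ih =>
    have hbt := (flatAfterDowns_cons_cons.1 h).2
    rw [delayDowns, if_neg ha,
      advanceDowns_cons_of_head_nonneg a (flatBeforeDowns_delayDowns hbt).2, ih hbt]

theorem delayDowns_advanceDowns {l : List ℤ} (h : FlatBeforeDowns l) :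
    delayDowns (advanceDowns l) = l := by
  induction l using advanceDowns.induct with
  | case1 | case2 => rfl
  | case3 a b t hb ih =>
    rw [advanceDowns, if_pos hb, delayDowns, if_pos hb, ih (h.of_cons_cons_of_neg hb)]
  | case4 a b t hb ih =>
    rw [advanceDowns, if_neg hb, delayDowns_cons_of_nonneg (flatBeforeDowns_cons.1 h).1,
      ih (h.of_cons_cons_of_nonneg (not_lt.1 hb))]

def StaysNonneg (c : ℤ) (l : List ℤ) : Prop := ∀ p ∈ l.scanl (· + ·) c, 0 ≤ p

theorem staysNonneg_nil {c : ℤ} : StaysNonneg c [] ↔ 0 ≤ c := by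
  simp [StaysNonneg]

theorem staysNonneg_cons {c a : ℤ} {l : List ℤ} :
    StaysNonneg c (a :: l) ↔ 0 ≤ c ∧ StaysNonneg (c + a) l := by
  simp [StaysNonneg, List.scanl_cons]

theorem StaysNonneg.nonneg_start {c : ℤ} {l : List ℤ} (h : StaysNonneg c l) : 0 ≤ c := by
  cases l with
  | nil => exact staysNonneg_nil.1 h
  | cons a t => exact (staysNonneg_cons.1 h).1

theorem staysNonneg_append {c : ℤ} {l₁ l₂ : List ℤ} :
    StaysNonneg c (l₁ ++ l₂) ↔ StaysNonneg c l₁ ∧ StaysNonneg (c + l₁.sum) l₂ := by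
  induction l₁ generalizing c with
  | nil => simpa using fun h => staysNonneg_nil.2 h.nonneg_start
  | cons a t ih =>
    simp only [List.cons_append, staysNonneg_cons, ih, List.sum_cons, add_assoc, and_assoc]

theorem StaysNonneg.delayDowns {c : ℤ} {l : List ℤ} (h : StaysNonneg c l) :
    StaysNonneg c (delayDowns l) := by
  induction l using delayDowns.induct generalizing c with
  | case1 | case2 => exact h
  | case3 a b t ha ih =>
    obtain ⟨hc, hca, hcab⟩ := by simpa only [staysNonneg_cons] using h
    rw [MotzkinAirPocket.delayDowns, if_pos ha]
    refine staysNonneg_cons.2 ⟨hc, staysNonneg_cons.2 ⟨by have := hcab.nonneg_start; omega, ?_⟩⟩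
    rw [add_right_comm]
    exact ih hcab
  | case4 a b t ha ih =>
    obtain ⟨hc, hca⟩ := staysNonneg_cons.1 h
    rw [MotzkinAirPocket.delayDowns, if_neg ha]
    exact staysNonneg_cons.2 ⟨hc, ih hca⟩

theorem StaysNonneg.advanceDowns {c : ℤ} {l : List ℤ} (h : StaysNonneg c l)
    (hl : l.IsChain fun a b => b < 0 → a = 0) : StaysNonneg c (advanceDowns l) := by
  induction l using advanceDowns.induct generalizing c with
  | case1 | case2 => exact h
  | case3 a b t hb ih =>
    obtain ⟨hc, hca, hcab⟩ := by simpa only [staysNonneg_cons] using h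
    have ha : a = 0 := (List.isChain_cons_cons.1 hl).1 hb
    rw [MotzkinAirPocket.advanceDowns, if_pos hb]
    refine staysNonneg_cons.2 ⟨hc, staysNonneg_cons.2 ⟨by have := hcab.nonneg_start; omega, ?_⟩⟩
    rw [add_right_comm]
    exact ih hcab hl.tail.tail
  | case4 a b t hb ih =>
    obtain ⟨hc, hca⟩ := staysNonneg_cons.1 h
    rw [MotzkinAirPocket.advanceDowns, if_neg hb]
    exact staysNonneg_cons.2 ⟨hc, ih hca hl.tail⟩

theorem _root_.isMAP_iff {l : List ℤ} :
    IsMAP l ↔ (∀ s ∈ l, s = 1 ∨ s = 0 ∨ s ≤ -1) ∧ StaysNonneg 0 l ∧ l.sum = 0 ∧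
      l.IsChain (fun a b => ¬(a < 0 ∧ b < 0)) :=
  Iff.rfl

theorem _root_.IsMAP.staysNonneg {l : List ℤ} (hl : IsMAP l) : StaysNonneg 0 l := hl.2.1

theorem _root_.IsMAP.of_perm {l l' : List ℤ} (hl : IsMAP l) (hp : l'.Perm l)
    (hh : StaysNonneg 0 l') (hdd : l'.IsChain fun a b => ¬(a < 0 ∧ b < 0)) : IsMAP l' :=
  ⟨fun s hs => hl.1 s (hp.subset hs), hh, hp.sum_eq.trans hl.2.2.1, hdd⟩

theorem _root_.isMAP_append_zero_iff {l : List ℤ} : IsMAP (l ++ [0]) ↔ IsMAP l := by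
  simp +contextual [isMAP_iff, staysNonneg_append, staysNonneg_cons, staysNonneg_nil,
    List.isChain_append, or_imp]

theorem _root_.IsMAP.isChain_flatAfterDowns_iff {l : List ℤ} (hl : IsMAP l) :
    l.IsChain (fun a b => a < 0 → b = 0) ↔ ValleyLess l := by
  obtain ⟨hs, -, -, hdd⟩ := hl
  change _ ↔ l.IsChain _
  change l.IsChain _ at hdd
  simp only [List.isChain_iff_forall_rel_of_append_cons_cons] at hdd ⊢
  refine ⟨fun h a b l₁ l₂ e => ?_, fun h a b l₁ l₂ e ha => ?_⟩
  · have := h e; omega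
  · have := hs b (by simp [e]); have := h e; have := hdd e; omega

theorem _root_.IsMAP.isChain_flatBeforeDowns_iff {l : List ℤ} (hl : IsMAP l) :
    l.IsChain (fun a b => b < 0 → a = 0) ↔ PeakLess l := by
  obtain ⟨hs, -, -, hdd⟩ := hl
  change _ ↔ l.IsChain _
  change l.IsChain _ at hdd
  simp only [List.isChain_iff_forall_rel_of_append_cons_cons] at hdd ⊢
  refine ⟨fun h a b l₁ l₂ e => ?_, fun h a b l₁ l₂ e hb => ?_⟩
  · have := h e; omega
  · have := hs a (by simp [e]); have := h e; have := hdd e; omega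

theorem _root_.IsMAP.flatBeforeDowns_iff {l : List ℤ} (hl : IsMAP l) :
    FlatBeforeDowns l ↔ PeakLess l := by
  refine ⟨fun h => hl.isChain_flatBeforeDowns_iff.1 h.1,
    fun h => ⟨hl.isChain_flatBeforeDowns_iff.2 h, ?_⟩⟩
  cases l with
  | nil => simp
  | cons a t => simpa using (staysNonneg_cons.1 hl.staysNonneg).2.nonneg_start

theorem _root_.IsMAP.flatAfterDowns_append_zero_iff {l : List ℤ} (hl : IsMAP l) :
    FlatAfterDowns (l ++ [0]) ↔ ValleyLess l := by
  simp [FlatAfterDowns, List.isChain_append, ← hl.isChain_flatAfterDowns_iff]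

theorem _root_.IsMAP.nonpos_of_append_singleton {l : List ℤ} {x : ℤ} (hl : IsMAP (l ++ [x])) :
    x ≤ 0 := by
  obtain ⟨-, hh, hsum, -⟩ := hl
  have := (staysNonneg_append.1 hh).2.nonneg_start
  rw [List.sum_append, List.sum_singleton] at hsum
  omega

theorem _root_.IsMAP.dropLast_append_zero {l : List ℤ} (hl : IsMAP l) (hf : FlatAfterDowns l)
    (hne : l ≠ []) : l.dropLast ++ [0] = l := by
  have e := List.dropLast_append_getLast hne
  have hx : 0 ≤ l.getLast hne := hf.2 _ (List.getLast?_eq_some_getLast hne)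
  rw [← e] at hl
  rwa [le_antisymm hl.nonpos_of_append_singleton hx] at e

def valleyLessMAPs (n : ℕ) : Set (List ℤ) := {l | IsMAP l ∧ ValleyLess l ∧ l.length = n}

def flatAfterDownsMAPs (n : ℕ) : Set (List ℤ) := {l | IsMAP l ∧ FlatAfterDowns l ∧ l.length = n}

def peakLessMAPs (n : ℕ) : Set (List ℤ) := {l | IsMAP l ∧ PeakLess l ∧ l.length = n}

theorem bijOn_append_zero {n : ℕ} (hn : 1 ≤ n) :
    Set.BijOn (· ++ [0]) (valleyLessMAPs (n - 1)) (flatAfterDownsMAPs n) := by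
  have hinv : ∀ m ∈ flatAfterDownsMAPs n, m.dropLast ++ [0] = m := fun m ⟨hm, hf, hlen⟩ =>
    hm.dropLast_append_zero hf (List.ne_nil_of_length_pos (by omega))
  refine Set.InvOn.bijOn ⟨fun l _ => List.dropLast_concat, hinv⟩ ?_ ?_
  · rintro l ⟨hl, hv, hlen⟩
    exact ⟨isMAP_append_zero_iff.2 hl, hl.flatAfterDowns_append_zero_iff.2 hv, by simp; omega⟩
  · intro m hm
    have ⟨hmap, hf, hlen⟩ := hm
    rw [← hinv m hm] at hmap hf
    have hmap := isMAP_append_zero_iff.1 hmap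
    exact ⟨hmap, hmap.flatAfterDowns_append_zero_iff.1 hf, by rw [List.length_dropLast, hlen]⟩

theorem bijOn_delayDowns (n : ℕ) :
    Set.BijOn delayDowns (flatAfterDownsMAPs n) (peakLessMAPs n) := by
  refine Set.InvOn.bijOn (f' := advanceDowns)
    ⟨fun l ⟨_, hf, _⟩ => advanceDowns_delayDowns hf,
      fun m ⟨hm, hp, _⟩ => delayDowns_advanceDowns (hm.flatBeforeDowns_iff.2 hp)⟩ ?_ ?_
  · rintro l ⟨hl, hf, rfl⟩
    have hb := flatBeforeDowns_delayDowns hf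
    have hmap : IsMAP (delayDowns l) := hl.of_perm (delayDowns_perm l)
      hl.staysNonneg.delayDowns (hb.1.imp fun _ _ h ⟨ha, hb⟩ => ha.ne (h hb))
    exact ⟨hmap, hmap.flatBeforeDowns_iff.1 hb, (delayDowns_perm l).length_eq⟩
  · rintro m ⟨hm, hp, rfl⟩
    have hb := hm.flatBeforeDowns_iff.2 hp
    have hf := flatAfterDowns_advanceDowns hb
    have hmap : IsMAP (advanceDowns m) := hm.of_perm (advanceDowns_perm m)
      (hm.staysNonneg.advanceDowns hb.1) (hf.1.imp fun _ _ h ⟨ha, hb⟩ => hb.ne (h ha))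
    exact ⟨hmap, hf, (advanceDowns_perm m).length_eq⟩

end MotzkinAirPocket

/-- There is a bijection between valley-less Motzkin paths with air pockets of length
`n-1` and peak-less Motzkin paths with air pockets of length `n`, for all `n ≥ 1`. -/
theorem valleyless_equiv_peakless (n : ℕ) (hn : 1 ≤ n) :
    Nonempty
      ({l : List ℤ // IsMAP l ∧ ValleyLess l ∧ l.length = n - 1} ≃
       {l : List ℤ // IsMAP l ∧ PeakLess l ∧ l.length = n}) :=
  ⟨((MotzkinAirPocket.bijOn_delayDowns n).comp (MotzkinAirPocket.bijOn_append_zero hn)).equiv _⟩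
end
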